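/- arXiv:1201.4593 — 3 statements merged into one kernel-verified Lean document; each statement's English description precedes it below -/
import Mathlib

section
/- Let n ∈ ℕ, let r ≤ s be real numbers, and let g : [r,s] → Mₙ(ℂ) be a C¹ map taking values in invertible matrices. Then the series Σ_{k≥0} ∫_{Δᵏ_{[r,s]}} (g(t₁)⁻¹g′(t₁)) ⋯ (g(t_k)⁻¹g′(t_k)) dt converges and its sum equals g(r)⁻¹ · g(s). (This is the multiplicative fundamental theorem of calculus for iterated integrals, equation (Gltrans) in the Appendix, used to prove that the Bismut–Chern–Simons form is well defined.) -/
open MeasureTheory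

attribute [local instance] Matrix.linftyOpNormedAddCommGroup Matrix.linftyOpNormedSpace

/-- The simplex `Δᵏ_{[a,b]} = {t ∈ ℝᵏ : a ≤ t₁ ≤ ⋯ ≤ t_k ≤ b}`. -/
def simplexSet (a b : ℝ) (k : ℕ) : Set (Fin k → ℝ) :=
  {t | (∀ i, a ≤ t i ∧ t i ≤ b) ∧ ∀ i j : Fin k, i ≤ j → t i ≤ t j}

/-- The iterated integral `∫_{Δᵏ_{[a,b]}} F₁(t₁)⋯F_k(t_k) dt` of the ordered matrix
product, computed entrywise.  For `k = 0` it is the identity matrix. -/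
noncomputable def iterInt {N : Type} [Fintype N] [DecidableEq N]
    (a b : ℝ) (k : ℕ) (F : Fin k → ℝ → Matrix N N ℂ) : Matrix N N ℂ :=
  Matrix.of fun i j =>
    ∫ t : Fin k → ℝ in simplexSet a b k, ((List.ofFn fun l => F l (t l)).prod) i j

/-!
Write `A = g⁻¹ g'` and `P k x = ∫_{Δᵏ_{[r,x]}} A(t₁) ⋯ A(t_k) dt`. Integrating out the last
coordinate of the simplex (Fubini) gives `P 0 = 1` and `P (k+1) x = ∫_r^x P k u * A u du`, while
`h x = g(r)⁻¹ g(x)` satisfies `h x = 1 + ∫_r^x h u * A u du` by the fundamental theorem of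
calculus, since `h A = g(r)⁻¹ g'`. Hence the remainders `h - ∑_{k<K} P k` obey the same recursion
as the `P k`, and if `‖A‖ ≤ M` on `[r,s]`, a sequence obeying this recursion and bounded by `C` at
`K = 0` is bounded by `C (M (x - r))^K / K!`. This gives both the summability of the series and
the convergence of its partial sums to `h s`.
-/

open Set

attribute [local instance] Matrix.linftyOpNormedRing Matrix.linftyOpNormedAlgebra

section Simplex

variable {a b : ℝ} {k : ℕ}

lemma isClosed_simplexSet (a b : ℝ) (k : ℕ) : IsClosed (simplexSet a b k) := by
  simp only [simplexSet, ofPred_and, ofPred_forall]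
  exact (isClosed_iInter fun i => (isClosed_le continuous_const (continuous_apply i)).inter
      (isClosed_le (continuous_apply i) continuous_const)).inter
    (isClosed_iInter fun i => isClosed_iInter fun j => isClosed_iInter fun _ =>
      isClosed_le (continuous_apply i) (continuous_apply j))

lemma simplexSet_subset_pi : simplexSet a b k ⊆ univ.pi fun _ => Icc a b :=
  fun _ ht i _ => ht.1 i

lemma isCompact_simplexSet (a b : ℝ) (k : ℕ) : IsCompact (simplexSet a b k) :=
  (isCompact_univ_pi fun _ => isCompact_Icc).of_isClosed_subset (isClosed_simplexSet a b k)
    simplexSet_subset_pi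

lemma simplexSet_zero (a b : ℝ) : simplexSet a b 0 = univ := by
  ext t; simp [simplexSet]

lemma snoc_mem_simplexSet_iff {t : Fin k → ℝ} {u : ℝ} :
    Fin.snoc t u ∈ simplexSet a b (k + 1) ↔ u ∈ Icc a b ∧ t ∈ simplexSet a u k := by
  constructor
  · rintro ⟨hbd, hmono⟩
    have hlast := hbd (Fin.last k)
    simp only [Fin.snoc_last] at hlast
    refine ⟨hlast, fun i => ?_, fun i j hij => ?_⟩
    · simpa using And.intro (hbd i.castSucc).1 (hmono i.castSucc (Fin.last k) (Fin.le_last _))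
    · simpa using hmono i.castSucc j.castSucc (by simpa using hij)
  · rintro ⟨hu, hbd, hmono⟩
    refine ⟨fun i => ?_, fun i j hij => ?_⟩
    · induction i using Fin.lastCases with
      | last => simpa using hu
      | cast i => simpa using And.intro (hbd i).1 ((hbd i).2.trans hu.2)
    · induction j using Fin.lastCases with
      | last =>
        induction i using Fin.lastCases with
        | last => exact le_rfl
        | cast i => simpa using (hbd i).2
      | cast j =>
        induction i using Fin.lastCases with
        | last => exact absurd hij (by simp)
        | cast i => simpa using hmono i j (by simpa using hij)

end Simplex

lemma list_prod_ofFn_snoc {M X : Type*} [Monoid M] {k : ℕ} (F : Fin (k + 1) → X → M)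
    (t : Fin k → X) (u : X) :
    (List.ofFn fun l => F l (Fin.snoc (α := fun _ => X) t u l)).prod
      = (List.ofFn fun l => F l.castSucc (t l)).prod * F (Fin.last k) u := by
  rw [List.ofFn_succ', List.prod_concat]
  simp

lemma continuousOn_list_prod_ofFn {X M : Type*} [TopologicalSpace X] [Monoid M]
    [TopologicalSpace M] [ContinuousMul M] {S : Set X} {k : ℕ} {f : Fin k → X → M}
    (hf : ∀ l, ContinuousOn (f l) S) :
    ContinuousOn (fun x => (List.ofFn fun l => f l x).prod) S := by
  simpa only [List.ofFn_eq_map] using continuousOn_list_prod (List.finRange k) fun l _ => hf l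

lemma integrableOn_simplexSet_list_prod {E : Type*} [NormedRing E] {a b : ℝ} {k : ℕ}
    {F : Fin k → ℝ → E} (hF : ∀ l, ContinuousOn (F l) (Icc a b)) :
    IntegrableOn (fun t : Fin k → ℝ => (List.ofFn fun l => F l (t l)).prod) (simplexSet a b k) :=
  (continuousOn_list_prod_ofFn fun l =>
    (hF l).comp (continuous_apply l).continuousOn fun _ ht => ht.1 l).integrableOn_compact
      (isCompact_simplexSet a b k)

lemma indicator_simplexSet_snoc {E : Type*} [Zero E] {a b : ℝ} {k : ℕ}
    (f : (Fin (k + 1) → ℝ) → E) (t : Fin k → ℝ) (u : ℝ) :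
    (simplexSet a b (k + 1)).indicator f (Fin.snoc t u)
      = (Icc a b).indicator
          (fun u => (simplexSet a u k).indicator (fun t => f (Fin.snoc t u)) t) u := by
  by_cases hu : u ∈ Icc a b <;> by_cases ht : t ∈ simplexSet a u k <;>
    simp [snoc_mem_simplexSet_iff, hu, ht]

lemma setIntegral_simplexSet_succ {E : Type*} [NormedAddCommGroup E] [NormedSpace ℝ E]
    {a b : ℝ} {k : ℕ} {f : (Fin (k + 1) → ℝ) → E}
    (hf : IntegrableOn f (simplexSet a b (k + 1))) :
    ∫ t in simplexSet a b (k + 1), f t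
      = ∫ u in Icc a b, ∫ t in simplexSet a u k, f (Fin.snoc t u) := by
  let e := (MeasurableEquiv.piFinSuccAbove (fun _ : Fin (k + 1) => ℝ) (Fin.last k)).symm
  have he : MeasurePreserving e (volume.prod volume) volume := by
    rw [← Measure.volume_eq_prod]
    exact (volume_preserving_piFinSuccAbove _ _).symm
  have he_apply (u : ℝ) (t : Fin k → ℝ) : e (u, t) = Fin.snoc t u := by
    simp [e, MeasurableEquiv.piFinSuccAbove_symm_apply]; rfl
  have hS := (isClosed_simplexSet a b (k + 1)).measurableSet
  have hint : Integrable ((simplexSet a b (k + 1)).indicator f ∘ e) (volume.prod volume) :=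
    (he.integrable_comp_emb e.measurableEmbedding).2 ((integrable_indicator_iff hS).2 hf)
  calc ∫ t in simplexSet a b (k + 1), f t
      = ∫ p, (simplexSet a b (k + 1)).indicator f (e p) ∂(volume.prod volume) := by
        rw [← integral_indicator hS, he.integral_comp']
    _ = ∫ u, ∫ t, (simplexSet a b (k + 1)).indicator f (e (u, t)) := integral_prod _ hint
    _ = ∫ u, (Icc a b).indicator (fun u => ∫ t in simplexSet a u k, f (Fin.snoc t u)) u := by
        congr 1 with u
        by_cases hu : u ∈ Icc a b <;>
          simp [he_apply, indicator_simplexSet_snoc, hu,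
            integral_indicator (isClosed_simplexSet a u k).measurableSet]
    _ = ∫ u in Icc a b, ∫ t in simplexSet a u k, f (Fin.snoc t u) :=
        integral_indicator measurableSet_Icc

section IteratedIntegral

variable {N : Type} [Fintype N] [DecidableEq N] {a b : ℝ} {k : ℕ}

lemma iterInt_eq_integral {F : Fin k → ℝ → Matrix N N ℂ}
    (hF : ∀ l, ContinuousOn (F l) (Icc a b)) :
    iterInt a b k F = ∫ t in simplexSet a b k, (List.ofFn fun l => F l (t l)).prod := by
  ext i j
  exact (Matrix.entryLinearMap ℝ ℂ i j).toContinuousLinearMap.integral_comp_comm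
    (integrableOn_simplexSet_list_prod hF)

lemma iterInt_zero (a b : ℝ) (F : Fin 0 → ℝ → Matrix N N ℂ) : iterInt a b 0 F = 1 := by
  ext i j
  simp [iterInt, simplexSet_zero, measureReal_def, volume_pi]

lemma iterInt_succ (hab : a ≤ b) {F : Fin (k + 1) → ℝ → Matrix N N ℂ}
    (hF : ∀ l, ContinuousOn (F l) (Icc a b)) :
    iterInt a b (k + 1) F
      = ∫ u in a..b, iterInt a u k (fun l => F l.castSucc) * F (Fin.last k) u := by
  rw [iterInt_eq_integral hF, setIntegral_simplexSet_succ (integrableOn_simplexSet_list_prod hF),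
    intervalIntegral.integral_of_le hab, ← integral_Icc_eq_integral_Ioc]
  refine setIntegral_congr_fun measurableSet_Icc fun u hu => ?_
  have hFu (l : Fin k) : ContinuousOn (F l.castSucc) (Icc a u) :=
    (hF _).mono (Icc_subset_Icc_right hu.2)
  simp only [list_prod_ofFn_snoc]
  rw [integral_mul_const_of_integrable (integrableOn_simplexSet_list_prod hFu),
    iterInt_eq_integral hFu]

end IteratedIntegral

section Dyson

open scoped Nat

variable {E : Type*} [NormedRing E] [NormedAlgebra ℝ E] {A h : ℝ → E} {D P : ℕ → ℝ → E}
  {r s : ℝ}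

lemma continuousOn_of_eq_intervalIntegral_mul (hA : ContinuousOn A (Icc r s))
    (hD0 : ContinuousOn (D 0) (Icc r s))
    (hD : ∀ k, ∀ x ∈ Icc r s, D (k + 1) x = ∫ u in r..x, D k u * A u) :
    ∀ k, ContinuousOn (D k) (Icc r s)
  | 0 => hD0
  | k + 1 => by
    refine (intervalIntegral.continuousOn_primitive
      (((continuousOn_of_eq_intervalIntegral_mul hA hD0 hD k).mul hA).integrableOn_compact
        (μ := volume) isCompact_Icc)).congr fun x hx => ?_
    rw [hD k x hx, intervalIntegral.integral_of_le hx.1]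
    rfl

lemma norm_intervalIntegral_mul_le {f : ℝ → E} {x C M : ℝ} {k : ℕ} (hx : r ≤ x)
    (hf : ∀ u ∈ Icc r x, ‖f u‖ ≤ C * (M * (u - r)) ^ k / k !)
    (hA : ∀ u ∈ Icc r x, ‖A u‖ ≤ M) :
    ‖∫ u in r..x, f u * A u‖ ≤ C * (M * (x - r)) ^ (k + 1) / (k + 1)! := by
  calc ‖∫ u in r..x, f u * A u‖ ≤ ∫ u in r..x, C * M ^ (k + 1) / k ! * (u - r) ^ k := by
        refine intervalIntegral.norm_integral_le_of_norm_le hx (ae_of_all _ fun u hu => ?_)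
          (Continuous.intervalIntegrable (μ := volume) (by fun_prop) _ _)
        have hu' : u ∈ Icc r x := Ioc_subset_Icc_self hu
        calc ‖f u * A u‖ ≤ ‖f u‖ * ‖A u‖ := norm_mul_le _ _
          _ ≤ C * (M * (u - r)) ^ k / k ! * M :=
            mul_le_mul (hf u hu') (hA u hu') (norm_nonneg _) ((norm_nonneg _).trans (hf u hu'))
          _ = _ := by rw [mul_pow]; ring
    _ = C * M ^ (k + 1) / k ! * ((x - r) ^ (k + 1) / (k + 1)) := by
        rw [intervalIntegral.integral_const_mul, intervalIntegral.integral_comp_sub_right (· ^ k),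
          integral_pow]
        simp
    _ = _ := by
        rw [Nat.factorial_succ, mul_pow]
        push_cast
        field_simp

lemma norm_le_of_eq_intervalIntegral_mul {C M : ℝ} (hA : ∀ u ∈ Icc r s, ‖A u‖ ≤ M)
    (hD0 : ∀ x ∈ Icc r s, ‖D 0 x‖ ≤ C)
    (hD : ∀ k, ∀ x ∈ Icc r s, D (k + 1) x = ∫ u in r..x, D k u * A u) :
    ∀ k, ∀ x ∈ Icc r s, ‖D k x‖ ≤ C * (M * (x - r)) ^ k / k !
  | 0, x, hx => by simpa using hD0 x hx
  | k + 1, x, hx => by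
    have hsub : Icc r x ⊆ Icc r s := Icc_subset_Icc_right hx.2
    rw [hD k x hx]
    exact norm_intervalIntegral_mul_le hx.1
      (fun u hu => norm_le_of_eq_intervalIntegral_mul hA hD0 hD k u (hsub hu))
      (fun u hu => hA u (hsub hu))

lemma sub_sum_range_succ_eq_intervalIntegral_mul (hA : ContinuousOn A (Icc r s))
    (hh : ContinuousOn h (Icc r s)) (hh_eq : ∀ x ∈ Icc r s, h x = 1 + ∫ u in r..x, h u * A u)
    (hP0 : ∀ x ∈ Icc r s, P 0 x = 1)
    (hP : ∀ k, ∀ x ∈ Icc r s, P (k + 1) x = ∫ u in r..x, P k u * A u)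
    (K : ℕ) {x : ℝ} (hx : x ∈ Icc r s) :
    h x - ∑ k ∈ Finset.range (K + 1), P k x
      = ∫ u in r..x, (h u - ∑ k ∈ Finset.range K, P k u) * A u := by
  have hint {f : ℝ → E} (hf : ContinuousOn f (Icc r s)) :
      IntervalIntegrable (fun u => f u * A u) volume r x :=
    ((hf.mul hA).mono (Icc_subset_Icc_right hx.2)).intervalIntegrable_of_Icc hx.1
  have hPc := continuousOn_of_eq_intervalIntegral_mul hA
    (continuousOn_const.congr hP0) hP
  simp only [sub_mul]
  rw [intervalIntegral.integral_sub (hint hh) (hint (continuousOn_finsetSum _ fun k _ => hPc k))]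
  simp only [Finset.sum_mul]
  rw [intervalIntegral.integral_finsetSum fun k _ => hint (hPc k), Finset.sum_range_succ', hP0 x hx,
    hh_eq x hx, Finset.sum_congr rfl fun k _ => hP k x hx]
  abel

theorem hasSum_of_eq_one_add_intervalIntegral_mul [CompleteSpace E] (hrs : r ≤ s)
    (hA : ContinuousOn A (Icc r s)) (hh : ContinuousOn h (Icc r s))
    (hh_eq : ∀ x ∈ Icc r s, h x = 1 + ∫ u in r..x, h u * A u)
    (hP0 : ∀ x ∈ Icc r s, P 0 x = 1)
    (hP : ∀ k, ∀ x ∈ Icc r s, P (k + 1) x = ∫ u in r..x, P k u * A u) :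
    HasSum (fun k => P k s) (h s) := by
  obtain ⟨M, hM⟩ := isCompact_Icc.exists_bound_of_continuousOn hA
  obtain ⟨C, hC⟩ := isCompact_Icc.exists_bound_of_continuousOn hh
  have hs : s ∈ Icc r s := ⟨hrs, le_rfl⟩
  have hP_le := norm_le_of_eq_intervalIntegral_mul hM (fun x hx => by rw [hP0 x hx]) hP
  have hR_le := norm_le_of_eq_intervalIntegral_mul
    (D := fun K x => h x - ∑ k ∈ Finset.range K, P k x) hM (by simpa using hC)
    fun K x hx => sub_sum_range_succ_eq_intervalIntegral_mul hA hh hh_eq hP0 hP K hx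
  have hsummable : Summable fun k => P k s :=
    .of_norm_bounded ((Real.summable_pow_div_factorial (M * (s - r))).mul_left ‖(1 : E)‖)
      fun k => (hP_le k s hs).trans_eq (mul_div_assoc _ _ _)
  have hlim := (FloorSemiring.tendsto_pow_div_factorial_atTop (M * (s - r))).const_mul C
  rw [mul_zero] at hlim
  refine hsummable.hasSum_iff_tendsto_nat.2 (tendsto_iff_norm_sub_tendsto_zero.2 ?_)
  refine squeeze_zero (fun _ => norm_nonneg _) (fun K => ?_) hlim
  rw [norm_sub_rev, ← mul_div_assoc]
  exact hR_le K s hs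

end Dyson

lemma ContinuousOn.matrix_inv {X n R : Type*} [TopologicalSpace X] [Fintype n] [DecidableEq n]
    [Field R] [TopologicalSpace R] [IsTopologicalDivisionRing R]
    {g : X → Matrix n n R} {S : Set X} (hg : ContinuousOn g S) (hunit : ∀ t ∈ S, IsUnit (g t)) :
    ContinuousOn (fun t => (g t)⁻¹) S := fun t ht =>
  (continuousAt_matrix_inv _ (by
    rw [Ring.inverse_eq_inv']
    exact continuousAt_inv₀ ((Matrix.isUnit_iff_isUnit_det _).1 (hunit t ht)).ne_zero
  )).comp_continuousWithinAt (hg t ht)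

lemma inv_mul_eq_one_add_intervalIntegral {N : Type} [Fintype N] [DecidableEq N]
    {g g' : ℝ → Matrix N N ℂ} {r x : ℝ} (hrx : r ≤ x)
    (hderiv : ∀ t ∈ Icc r x, HasDerivAt g (g' t) t) (hg' : ContinuousOn g' (Icc r x))
    (hunit : ∀ t ∈ Icc r x, IsUnit (g t)) :
    (g r)⁻¹ * g x = 1 + ∫ u in r..x, (g r)⁻¹ * g u * ((g u)⁻¹ * g' u) := by
  have hdet (t) (ht : t ∈ Icc r x) : IsUnit (g t).det :=
    (Matrix.isUnit_iff_isUnit_det _).1 (hunit t ht)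
  have hcancel :
      ∫ u in r..x, (g r)⁻¹ * g u * ((g u)⁻¹ * g' u) = ∫ u in r..x, (g r)⁻¹ * g' u := by
    refine intervalIntegral.integral_congr fun u hu => ?_
    rw [uIcc_of_le hrx] at hu
    simp only [Matrix.mul_assoc, Matrix.mul_nonsing_inv_cancel_left _ _ (hdet u hu)]
  rw [hcancel, intervalIntegral.integral_eq_sub_of_hasDerivAt
    (fun u hu => (hderiv u (uIcc_of_le hrx ▸ hu)).const_mul _)
    ((continuousOn_const.mul hg').intervalIntegrable_of_Icc hrx),
    Matrix.nonsing_inv_mul _ (hdet r ⟨le_rfl, hrx⟩)]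
  abel

/-- **Multiplicative fundamental theorem of calculus for iterated integrals**
(equation (Gltrans) in the Appendix): if `g : [r,s] → Mₙ(ℂ)` is `C¹` with invertible
values, then `Σ_{k≥0} ∫_{Δᵏ_{[r,s]}} (g⁻¹g′)(t₁)⋯(g⁻¹g′)(t_k) dt = g(r)⁻¹ · g(s)`. -/
theorem iterInt_inv_mul_deriv_hasSum (n : ℕ) (r s : ℝ) (hrs : r ≤ s)
    (g g' : ℝ → Matrix (Fin n) (Fin n) ℂ)
    (hderiv : ∀ t ∈ Set.Icc r s, HasDerivAt g (g' t) t)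
    (hg' : ContinuousOn g' (Set.Icc r s))
    (hunit : ∀ t ∈ Set.Icc r s, IsUnit (g t)) :
    HasSum (fun k => iterInt r s k fun _ t => (g t)⁻¹ * g' t) ((g r)⁻¹ * g s) := by
  have hg : ContinuousOn g (Icc r s) := fun t ht => (hderiv t ht).continuousAt.continuousWithinAt
  have hA : ContinuousOn (fun t => (g t)⁻¹ * g' t) (Icc r s) := (hg.matrix_inv hunit).mul hg'
  refine hasSum_of_eq_one_add_intervalIntegral_mul (h := fun x => (g r)⁻¹ * g x)
    (P := fun k x => iterInt r x k fun _ t => (g t)⁻¹ * g' t) hrs hA (continuousOn_const.mul hg)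
    (fun x hx => ?_) (fun x _ => iterInt_zero r x _)
    (fun k x hx => iterInt_succ hx.1 fun _ => hA.mono (Icc_subset_Icc_right hx.2))
  have hsub : Icc r x ⊆ Icc r s := Icc_subset_Icc_right hx.2
  exact inv_mul_eq_one_add_intervalIntegral hx.1 (fun t ht => hderiv t (hsub ht)) (hg'.mono hsub)
    (fun t ht => hunit t (hsub ht))
end

section
/- Let n, m ∈ ℕ and let A : [0,1] → Mₙ(ℂ) and B : [0,1] → M_m(ℂ) be continuous. Define C : [0,1] → M_{nm}(ℂ) by C(t) = A(t) ⊗ I_m + I_n ⊗ B(t), where ⊗ denotes the Kronecker (tensor) product of matrices. Then hol(C) = hol(A) ⊗ hol(B), and hence Tr(hol(C)) = Tr(hol(A)) · Tr(hol(B)). (This is the degree-zero instance of Theorem 3.3: the Bismut–Chern form of a tensor product connection ∇⊗Id + Id⊗∇̄ is the product of the Bismut–Chern forms.) -/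
/-!
By the Leibniz rule and the mixed-product property `(X ⊗ Y)(X' ⊗ Y') = XX' ⊗ YY'`, the curve
`t ↦ Y_A(t) ⊗ Y_B(t)` solves the parallel-transport equation of `C = A ⊗ 1 + 1 ⊗ B` with initial
value `1`. Since `Y ↦ Y C(t)` is Lipschitz with constant `sup ‖C‖` on `[0,1]`, solutions of this
linear ODE are unique, so `hol(C) = hol(A) ⊗ hol(B)`; the trace is multiplicative on Kronecker
products.
-/

open Kronecker

attribute [local instance] Matrix.linftyOpNormedAddCommGroup Matrix.linftyOpNormedSpace
  Matrix.linftyOpNormedRing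

open Set

theorem ContinuousOn.kronecker {X α l m n p : Type*} [TopologicalSpace X] [TopologicalSpace α]
    [Mul α] [ContinuousMul α] {A : X → Matrix l m α} {B : X → Matrix n p α} {s : Set X}
    (hA : ContinuousOn A s) (hB : ContinuousOn B s) :
    ContinuousOn (fun x => A x ⊗ₖ B x) s :=
  continuousOn_pi.2 fun i => continuousOn_pi.2 fun j =>
    ((continuous_id.matrix_elem i.1 j.1).comp_continuousOn hA).mul
      ((continuous_id.matrix_elem i.2 j.2).comp_continuousOn hB)

section Derivatives

variable {𝕜 α : Type*} [NontriviallyNormedField 𝕜] [CompleteSpace 𝕜] [NormedCommRing α]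
  [NormedAlgebra 𝕜 α] [FiniteDimensional 𝕜 α]

theorem HasDerivAt.kronecker {l m n p : Type*} [Fintype l] [Fintype m] [Fintype n] [Fintype p]
    {A : 𝕜 → Matrix l m α} {B : 𝕜 → Matrix n p α} {A' : Matrix l m α} {B' : Matrix n p α}
    {t : 𝕜} (hA : HasDerivAt A A' t) (hB : HasDerivAt B B' t) :
    HasDerivAt (fun s => A s ⊗ₖ B s) (A t ⊗ₖ B' + A' ⊗ₖ B t) t :=
  (Matrix.kroneckerBilinear (R := 𝕜) (α := α) (l := l) (m := m) (n := n) (p := p)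
    ).toContinuousBilinearMap.hasDerivAt_of_bilinear (fun _ => hA) (fun _ => hB)

theorem HasDerivAt.kronecker_of_mul_right {n m : Type*} [Fintype n] [Fintype m]
    [DecidableEq n] [DecidableEq m] {Y A : 𝕜 → Matrix n n α} {Z B : 𝕜 → Matrix m m α} {t : 𝕜}
    (hY : HasDerivAt Y (Y t * A t) t) (hZ : HasDerivAt Z (Z t * B t) t) :
    HasDerivAt (fun s => Y s ⊗ₖ Z s) ((Y t ⊗ₖ Z t) * (A t ⊗ₖ 1 + 1 ⊗ₖ B t)) t := by
  convert hY.kronecker hZ using 1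
  simp only [mul_add, ← Matrix.mul_kronecker_mul, Matrix.mul_one, add_comm]

end Derivatives

theorem eqOn_Icc_of_hasDerivAt_mul_right {R : Type*} [NormedRing R] [NormedSpace ℝ R]
    {C Y Z : ℝ → R} {a b : ℝ} (hC : ContinuousOn C (Icc a b))
    (hY : ∀ t ∈ Icc a b, HasDerivAt Y (Y t * C t) t)
    (hZ : ∀ t ∈ Icc a b, HasDerivAt Z (Z t * C t) t) (ha : Y a = Z a) :
    EqOn Y Z (Icc a b) := by
  obtain ⟨K, hK⟩ := isCompact_Icc.exists_bound_of_continuousOn hC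
  have hlip : ∀ t ∈ Ico a b, LipschitzOnWith (Real.toNNReal K) (· * C t) univ := fun t ht =>
    LipschitzWith.lipschitzOnWith <| LipschitzWith.of_dist_le_mul fun U V => by
      rw [dist_eq_norm, dist_eq_norm, ← sub_mul, mul_comm]
      exact (norm_mul_le _ _).trans <| by
        gcongr
        exact (hK t (Ico_subset_Icc_self ht)).trans (Real.le_coe_toNNReal K)
  exact ODE_solution_unique_of_mem_Icc_right hlip
    (fun t ht => (hY t ht).continuousAt.continuousWithinAt)
    (fun t ht => (hY t (Ico_subset_Icc_self ht)).hasDerivWithinAt) (fun _ _ => mem_univ _)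
    (fun t ht => (hZ t ht).continuousAt.continuousWithinAt)
    (fun t ht => (hZ t (Ico_subset_Icc_self ht)).hasDerivWithinAt) (fun _ _ => mem_univ _) ha

/-- **Holonomy of a tensor product** (degree-zero instance of Theorem 3.3): if
`Y_A, Y_B, Y_C` solve the parallel-transport ODEs for `A`, `B` and
`C(t) = A(t) ⊗ I + I ⊗ B(t)` respectively, then `hol(C) = hol(A) ⊗ hol(B)` and
`Tr(hol(C)) = Tr(hol(A))·Tr(hol(B))`. -/
theorem holonomy_kronecker_sum (n m : ℕ)
    (A : ℝ → Matrix (Fin n) (Fin n) ℂ) (B : ℝ → Matrix (Fin m) (Fin m) ℂ)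
    (hA : ContinuousOn A (Set.Icc 0 1)) (hB : ContinuousOn B (Set.Icc 0 1))
    (YA : ℝ → Matrix (Fin n) (Fin n) ℂ) (YB : ℝ → Matrix (Fin m) (Fin m) ℂ)
    (YC : ℝ → Matrix (Fin n × Fin m) (Fin n × Fin m) ℂ)
    (hYA : ∀ t ∈ Set.Icc (0:ℝ) 1, HasDerivAt YA (YA t * A t) t) (hYA0 : YA 0 = 1)
    (hYB : ∀ t ∈ Set.Icc (0:ℝ) 1, HasDerivAt YB (YB t * B t) t) (hYB0 : YB 0 = 1)
    (hYC : ∀ t ∈ Set.Icc (0:ℝ) 1,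
      HasDerivAt YC
        (YC t * (A t ⊗ₖ (1 : Matrix (Fin m) (Fin m) ℂ) +
          (1 : Matrix (Fin n) (Fin n) ℂ) ⊗ₖ B t)) t)
    (hYC0 : YC 0 = 1) :
    YC 1 = YA 1 ⊗ₖ YB 1 ∧ (YC 1).trace = (YA 1).trace * (YB 1).trace := by
  have hC : ContinuousOn (fun t => A t ⊗ₖ (1 : Matrix (Fin m) (Fin m) ℂ) +
      (1 : Matrix (Fin n) (Fin n) ℂ) ⊗ₖ B t) (Icc 0 1) :=
    (hA.kronecker continuousOn_const).add (continuousOn_const.kronecker hB)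
  have hhol : YC 1 = YA 1 ⊗ₖ YB 1 :=
    eqOn_Icc_of_hasDerivAt_mul_right hC hYC
      (fun t ht => (hYA t ht).kronecker_of_mul_right (hYB t ht))
      (by simp [hYC0, hYA0, hYB0]) ⟨zero_le_one, le_rfl⟩
  exact ⟨hhol, by rw [hhol, Matrix.trace_kronecker]⟩
end

section
/- Let n ∈ ℕ and let (s,t) ↦ A_s(t) be a smooth map [0,1] × [0,1] → Mₙ(ℂ). For each s let Y_s : [0,1] → Mₙ(ℂ) be the unique solution of Y_s′(t) = Y_s(t)·A_s(t) with Y_s(0) = 1 (so Y_s(t) is invertible for all t). Then the function s ↦ Tr(Y_s(1)) = Tr(hol(A_s)) is differentiable, with derivative (d/ds) Tr(hol(A_s)) = ∫₀¹ Tr( Y_s(t) · (∂A_s/∂s)(t) · Y_s(t)⁻¹ · Y_s(1) ) dt. (This Duhamel-type formula is the concrete content of Corollary 4.4: the difference of the traces of the holonomies of two connections is given by the contraction of a 1-form on LM, namely the degree-one Bismut–Chern–Simons form.) -/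
attribute [local instance] Matrix.linftyOpNormedAddCommGroup Matrix.linftyOpNormedSpace

open Set Matrix

section Aux
attribute [local instance] Matrix.linftyOpNormedRing Matrix.linftyOpNormedAlgebra

/-- Grönwall: a solution of a linear ODE-type inequality vanishing at the left endpoint
vanishes on the whole interval. -/
lemma holaux_ode_zero {E : Type*} [NormedAddCommGroup E] [NormedSpace ℝ E] {f f' : ℝ → E} {a b K : ℝ}
    (hd : ∀ t, HasDerivAt f (f' t) t)
    (hb : ∀ t ∈ Set.Icc a b, ‖f' t‖ ≤ K * ‖f t‖) (h0 : f a = 0) :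
    ∀ t ∈ Set.Icc a b, f t = 0 := by
  intro t ht
  have h := norm_le_gronwallBound_of_norm_deriv_right_le (f := f) (f' := f')
    (δ := 0) (K := K) (ε := 0) (a := a) (b := b)
    (fun x _ => (hd x).continuousAt.continuousWithinAt)
    (fun x _ => (hd x).hasDerivWithinAt)
    (by simp [h0])
    (fun x hx => by simpa using hb x (Set.Ico_subset_Icc_self hx)) t ht
  rw [gronwallBound_ε0_δ0] at h
  simpa using le_antisymm h (norm_nonneg _)

/-- Invertibility of solutions of `Y' = Y·A`, `Y 0 = 1`. -/
lemma holaux_isUnit {n : ℕ} {A Y : ℝ → Matrix (Fin n) (Fin n) ℂ} (hA : Continuous A)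
    (hY : ∀ t, HasDerivAt Y (Y t * A t) t) (hY0 : Y 0 = 1) {t₀ : ℝ} (ht₀ : 0 ≤ t₀) :
    IsUnit (Y t₀) := by
  rw [Matrix.isUnit_iff_isUnit_det, isUnit_iff_ne_zero]
  intro hdet
  obtain ⟨v, hv, hv0⟩ := Matrix.exists_vecMul_eq_zero_iff.mpr hdet
  obtain ⟨i, hvi⟩ := Function.ne_iff.mp hv
  set P₀ : Matrix (Fin n) (Fin n) ℂ := Matrix.of (fun _ j => v j) with hP₀
  have hP₀Y : ∀ X : Matrix (Fin n) (Fin n) ℂ, P₀ * X = Matrix.of (fun _ j => (v ᵥ* X) j) := by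
    intro X
    ext i' j
    simp [hP₀, Matrix.mul_apply, Matrix.vecMul, dotProduct]
  -- g solves g' = g * A with g t₀ = 0
  set g : ℝ → Matrix (Fin n) (Fin n) ℂ := fun t => P₀ * Y t with hg
  have hgd : ∀ t, HasDerivAt g (g t * A t) t := by
    intro t
    show HasDerivAt (fun t => P₀ * Y t) (P₀ * Y t * A t) t
    rw [mul_assoc]
    exact (hY t).const_mul P₀
  have hgt₀ : g t₀ = 0 := by
    ext i' j
    simp [hg, hP₀Y, hv0]
  -- reversed time
  set h : ℝ → Matrix (Fin n) (Fin n) ℂ := fun τ => g (t₀ - τ) with hh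
  have hhd : ∀ τ : ℝ, HasDerivAt h (-(h τ * A (t₀ - τ))) τ := by
    intro τ
    have h1 : HasDerivAt (fun τ : ℝ => t₀ - τ) (-1) τ := by
      simpa using (hasDerivAt_id τ).const_sub t₀
    have := (hgd (t₀ - τ)).scomp τ h1
    simp only [neg_one_smul] at this
    exact this
  obtain ⟨K, hK⟩ := (isCompact_Icc (a := 0) (b := t₀)).exists_bound_of_continuousOn
    ((hA.comp (continuous_const.sub continuous_id)).continuousOn
      (s := Set.Icc 0 t₀))
  have hzero : ∀ τ ∈ Set.Icc 0 t₀, h τ = 0 := by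
    refine holaux_ode_zero (K := K) hhd (fun τ hτ => ?_) (by simpa [hh] using hgt₀)
    calc ‖-(h τ * A (t₀ - τ))‖ = ‖h τ * A (t₀ - τ)‖ := norm_neg _
      _ ≤ ‖h τ‖ * ‖A (t₀ - τ)‖ := norm_mul_le _ _
      _ ≤ ‖h τ‖ * K := by
          have := hK τ hτ
          exact mul_le_mul_of_nonneg_left (by simpa using this) (norm_nonneg _)
      _ = K * ‖h τ‖ := mul_comm _ _
  have : h t₀ = 0 := hzero t₀ ⟨ht₀, le_refl _⟩
  rw [hh] at this
  simp only [sub_self, hg, hY0, mul_one] at this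
  have := congrFun (congrFun this i) i
  simp [hP₀] at this
  exact hvi this

/-- Derivative of the (nonsingular) inverse along a solution of `Y' = Y·A`. -/
lemma holaux_hasDerivAt_inv {n : ℕ} {A Y : ℝ → Matrix (Fin n) (Fin n) ℂ}
    (hY : ∀ t, HasDerivAt Y (Y t * A t) t) {t : ℝ} (h : IsUnit (Y t)) :
    HasDerivAt (fun τ => (Y τ)⁻¹) (-(A t * (Y t)⁻¹)) t := by
  have hfun : (fun τ => (Y τ)⁻¹) = Ring.inverse ∘ Y := by
    funext τ; rw [Matrix.nonsing_inv_eq_ringInverse]; rfl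
  have hinv : ((h.unit⁻¹ : _) : Matrix (Fin n) (Fin n) ℂ) = (Y t)⁻¹ := by
    rw [Matrix.nonsing_inv_eq_ringInverse]
    conv_rhs => rw [← h.unit_spec]
    exact (Ring.inverse_unit h.unit).symm
  have hd := (hasFDerivAt_ringInverse (𝕜 := ℝ) h.unit).comp_hasDerivAt t (hY t)
  rw [← hfun] at hd
  have hsimp : (-(ContinuousLinearMap.mulLeftRight ℝ _ ((h.unit⁻¹ : _) : Matrix (Fin n) (Fin n) ℂ)
      ((h.unit⁻¹ : _) : Matrix (Fin n) (Fin n) ℂ))) (Y t * A t) = -(A t * (Y t)⁻¹) := by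
    simp only [ContinuousLinearMap.neg_apply, ContinuousLinearMap.mulLeftRight_apply, hinv]
    rw [← mul_assoc, Matrix.nonsing_inv_mul _ ((Matrix.isUnit_iff_isUnit_det _).mp h), one_mul]
  rwa [hsimp] at hd

lemma holaux_gronwall {E : Type*} [NormedAddCommGroup E] [NormedSpace ℝ E]
    {f f' : ℝ → E} {a b K ε δ : ℝ}
    (hd : ∀ t, HasDerivAt f (f' t) t)
    (hb : ∀ t ∈ Set.Icc a b, ‖f' t‖ ≤ K * ‖f t‖ + ε) (ha : ‖f a‖ ≤ δ) :
    ∀ t ∈ Set.Icc a b, ‖f t‖ ≤ gronwallBound δ K ε (t - a) :=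
  norm_le_gronwallBound_of_norm_deriv_right_le
    (fun x _ => (hd x).continuousAt.continuousWithinAt)
    (fun x _ => (hd x).hasDerivWithinAt) ha
    (fun x hx => hb x (Set.Ico_subset_Icc_self hx))

lemma holaux_gronwallBound_le {δ K ε x : ℝ} (hδ : 0 ≤ δ) (hε : 0 ≤ ε) (hK : 1 ≤ K)
    (hx0 : 0 ≤ x) (hx1 : x ≤ 1) : gronwallBound δ K ε x ≤ (δ + ε) * Real.exp K := by
  rw [gronwallBound_of_K_ne_0 (by linarith)]
  have h1 : Real.exp (K * x) ≤ Real.exp K := Real.exp_le_exp.2 (by nlinarith)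
  have h2 : (1:ℝ) ≤ Real.exp (K * x) := Real.one_le_exp (by nlinarith)
  have h3 : ε / K ≤ ε := div_le_self hε hK
  have h4 : 0 ≤ ε / K := div_nonneg hε (by linarith)
  nlinarith [Real.exp_pos K]

end Aux

set_option maxHeartbeats 1600000 in
/-- **Duhamel formula for the trace of holonomy** (the concrete content of
Corollary 4.4): for a smooth family of connection coefficients `A_s(t)` with
parallel transports `Y_s` solving `Y_s′(t) = Y_s(t)·A_s(t)`, `Y_s(0) = 1`, the
function `s ↦ Tr(hol(A_s)) = Tr(Y_s(1))` is differentiable with derivative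
`∫₀¹ Tr(Y_s(t)·(∂A_s/∂s)(t)·Y_s(t)⁻¹·Y_s(1)) dt`. -/
theorem hasDerivAt_trace_holonomy (n : ℕ)
    (A : ℝ → ℝ → Matrix (Fin n) (Fin n) ℂ)
    (hA : ContDiff ℝ (⊤ : ℕ∞) fun p : ℝ × ℝ => A p.1 p.2)
    (Y : ℝ → ℝ → Matrix (Fin n) (Fin n) ℂ)
    (hY : ∀ s t : ℝ, HasDerivAt (Y s) (Y s t * A s t) t)
    (hY0 : ∀ s, Y s 0 = 1) :
    ∀ s ∈ Set.Icc (0:ℝ) 1,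
      HasDerivAt (fun u => (Y u 1).trace)
        (∫ t in (0:ℝ)..1,
          (Y s t * deriv (fun u => A u t) s * (Y s t)⁻¹ * Y s 1).trace) s := by
  intro s hs
  letI : NormedRing (Matrix (Fin n) (Fin n) ℂ) := Matrix.linftyOpNormedRing
  letI : NormedAlgebra ℝ (Matrix (Fin n) (Fin n) ℂ) := Matrix.linftyOpNormedAlgebra
  -- the trace as a continuous ℝ-linear map
  set L : Matrix (Fin n) (Fin n) ℂ →L[ℝ] ℂ :=
    LinearMap.toContinuousLinearMap ((Matrix.traceLinearMap (Fin n) ℂ ℂ).restrictScalars ℝ)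
    with hLdef
  have hL : ∀ X : Matrix (Fin n) (Fin n) ℂ, L X = X.trace := fun X => by simp [hLdef]
  -- the parameter-direction derivative of A
  set F : ℝ × ℝ → Matrix (Fin n) (Fin n) ℂ := fun p => A p.1 p.2 with hFdef
  set A' : ℝ × ℝ → Matrix (Fin n) (Fin n) ℂ := fun p => fderiv ℝ F p (1, 0) with hA'def
  have hA'cont : Continuous A' := (hA.continuous_fderiv (by simp)).clm_apply continuous_const
  have hder : ∀ u t : ℝ, HasDerivAt (fun v => A v t) (A' (u, t)) u := by
    intro u t
    have h1 : HasDerivAt (fun v : ℝ => (v, t)) ((1:ℝ), (0:ℝ)) u :=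
      (hasDerivAt_id u).prodMk (hasDerivAt_const u t)
    have h2 := ((hA.differentiable (by simp)) (u, t)).hasFDerivAt.comp_hasDerivAt u h1
    exact h2
  -- continuity facts
  have hYc : ∀ u, Continuous (Y u) := fun u =>
    continuous_iff_continuousAt.2 fun t => (hY u t).differentiableAt.continuousAt
  have hAc : ∀ u, Continuous (fun t => A u t) :=
    fun u => hA.continuous.comp (continuous_const.prodMk continuous_id)
  -- compact rectangle and bounds
  have hKcpt : IsCompact ((Set.Icc (s-1) (s+1)) ×ˢ (Set.Icc (0:ℝ) 1)) :=
    isCompact_Icc.prod isCompact_Icc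
  obtain ⟨CA₀, hCA₀⟩ := hKcpt.exists_bound_of_continuousOn hA.continuous.continuousOn
  set CA : ℝ := max CA₀ 1 with hCAdef
  have hCA1 : (1:ℝ) ≤ CA := le_max_right _ _
  have huIcc : ∀ u : ℝ, |u - s| ≤ 1 → u ∈ Set.Icc (s-1) (s+1) := by
    intro u h
    rcases abs_le.mp h with ⟨h1, h2⟩
    exact ⟨by linarith, by linarith⟩
  have hsIcc : s ∈ Set.Icc (s-1) (s+1) := ⟨by linarith, by linarith⟩
  have hCA : ∀ u ∈ Set.Icc (s-1) (s+1), ∀ t ∈ Set.Icc (0:ℝ) 1, ‖A u t‖ ≤ CA := by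
    intro u hu t ht
    exact (hCA₀ (u, t) (Set.mk_mem_prod hu ht)).trans (le_max_left _ _)
  obtain ⟨CA'₀, hCA'₀⟩ := hKcpt.exists_bound_of_continuousOn hA'cont.continuousOn
  set CA' : ℝ := max CA'₀ 0 with hCA'def
  have hCA'0 : (0:ℝ) ≤ CA' := le_max_right _ _
  have hCA' : ∀ t ∈ Set.Icc (0:ℝ) 1, ‖A' (s, t)‖ ≤ CA' := by
    intro t ht
    exact (hCA'₀ (s, t) (Set.mk_mem_prod hsIcc ht)).trans (le_max_left _ _)
  -- bound on Y on the rectangle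
  set CY : ℝ := ‖(1 : Matrix (Fin n) (Fin n) ℂ)‖ * Real.exp CA with hCYdef
  have hCY0 : (0:ℝ) ≤ CY := mul_nonneg (norm_nonneg _) (Real.exp_pos _).le
  have hYbdd : ∀ u ∈ Set.Icc (s-1) (s+1), ∀ t ∈ Set.Icc (0:ℝ) 1, ‖Y u t‖ ≤ CY := by
    intro u hu t ht
    have hgr := holaux_gronwall (K := CA) (ε := 0) (δ := ‖(1 : Matrix (Fin n) (Fin n) ℂ)‖)
      (a := 0) (b := 1) (hY u) (fun τ hτ => by
        rw [add_zero]
        calc ‖Y u τ * A u τ‖ ≤ ‖Y u τ‖ * ‖A u τ‖ := norm_mul_le _ _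
          _ ≤ ‖Y u τ‖ * CA := mul_le_mul_of_nonneg_left (hCA u hu τ hτ) (norm_nonneg _)
          _ = CA * ‖Y u τ‖ := mul_comm _ _)
      (le_of_eq (by rw [hY0 u]))
    have h1 := hgr t ht
    rw [sub_zero] at h1
    refine h1.trans ?_
    have h2 := holaux_gronwallBound_le (δ := ‖(1 : Matrix (Fin n) (Fin n) ℂ)‖) (ε := 0)
      (norm_nonneg _) le_rfl hCA1 ht.1 ht.2
    rw [add_zero] at h2
    rw [hCYdef]
    exact h2
  -- continuity of Y in the parameter, uniformly in time (Grönwall)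
  have huc : ∀ (G : ℝ × ℝ → Matrix (Fin n) (Fin n) ℂ), Continuous G →
      ∀ ε > (0:ℝ), ∃ η > (0:ℝ), η ≤ 1 ∧ ∀ u : ℝ, |u - s| ≤ η →
        ∀ t ∈ Set.Icc (0:ℝ) 1, ‖G (u, t) - G (s, t)‖ ≤ ε := by
    intro G hG ε hε
    have hucont := hKcpt.uniformContinuousOn_of_continuous hG.continuousOn
    obtain ⟨δ, hδ0, hδ⟩ := Metric.uniformContinuousOn_iff_le.mp hucont ε hε
    refine ⟨min δ 1, lt_min hδ0 one_pos, min_le_right _ _, ?_⟩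
    intro u hu t ht
    have hu1 : |u - s| ≤ 1 := hu.trans (min_le_right _ _)
    have huK : (u, t) ∈ (Set.Icc (s-1) (s+1)) ×ˢ (Set.Icc (0:ℝ) 1) :=
      Set.mk_mem_prod (huIcc u hu1) ht
    have hsK : (s, t) ∈ (Set.Icc (s-1) (s+1)) ×ˢ (Set.Icc (0:ℝ) 1) :=
      Set.mk_mem_prod hsIcc ht
    have hd : dist (u, t) (s, t) ≤ δ := by
      rw [Prod.dist_eq]
      simp only [dist_self, Real.dist_eq]
      exact max_le (hu.trans (min_le_left _ _)) (by positivity)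
    have := hδ (u, t) huK (s, t) hsK hd
    rwa [dist_eq_norm] at this
  have hYdiff : ∀ ε > (0:ℝ), ∃ η > (0:ℝ), η ≤ 1 ∧ ∀ u : ℝ, |u - s| ≤ η →
      ∀ t ∈ Set.Icc (0:ℝ) 1, ‖Y u t - Y s t‖ ≤ ε := by
    intro ε hε
    have hden : (0:ℝ) < (CY + 1) * Real.exp CA := by positivity
    set ε' : ℝ := ε / ((CY + 1) * Real.exp CA) with hε'def
    have hε'0 : 0 < ε' := div_pos hε hden
    obtain ⟨η, hη0, hη1, hηA⟩ := huc F hA.continuous ε' hε'0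
    refine ⟨η, hη0, hη1, ?_⟩
    intro u hu t ht
    have huI : u ∈ Set.Icc (s-1) (s+1) := huIcc u (hu.trans hη1)
    have hDd : ∀ τ : ℝ, HasDerivAt (fun τ => Y u τ - Y s τ)
        (Y u τ * A u τ - Y s τ * A s τ) τ := fun τ => (hY u τ).sub (hY s τ)
    have hgr := holaux_gronwall (K := CA) (ε := CY * ε') (δ := 0) (a := 0) (b := 1) hDd
      (fun τ hτ => by
        have hsplit : Y u τ * A u τ - Y s τ * A s τ
            = (Y u τ - Y s τ) * A u τ + Y s τ * (A u τ - A s τ) := by noncomm_ring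
        rw [hsplit]
        calc ‖(Y u τ - Y s τ) * A u τ + Y s τ * (A u τ - A s τ)‖
            ≤ ‖(Y u τ - Y s τ) * A u τ‖ + ‖Y s τ * (A u τ - A s τ)‖ := norm_add_le _ _
          _ ≤ ‖Y u τ - Y s τ‖ * CA + CY * ε' := by
              refine add_le_add ?_ ?_
              · exact (norm_mul_le _ _).trans
                  (mul_le_mul_of_nonneg_left (hCA u huI τ hτ) (norm_nonneg _))
              · exact (norm_mul_le _ _).trans
                  (mul_le_mul (hYbdd s hsIcc τ hτ) (hηA u hu τ hτ) (norm_nonneg _) hCY0)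
          _ = CA * ‖Y u τ - Y s τ‖ + CY * ε' := by ring_nf)
      (by simp [hY0])
    have := hgr t ht
    rw [sub_zero] at this
    have h2 := holaux_gronwallBound_le (δ := 0) (ε := CY * ε')
      le_rfl (by positivity) hCA1 ht.1 ht.2
    refine (this.trans h2).trans ?_
    rw [zero_add, hε'def]
    have hexp : (0:ℝ) < Real.exp CA := Real.exp_pos _
    have key2 : CY * (ε / ((CY + 1) * Real.exp CA)) * Real.exp CA = ε * CY / (CY + 1) := by
      field_simp
    rw [key2, div_le_iff₀ (by positivity : (0:ℝ) < CY + 1)]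
    nlinarith
  -- the slope of A in the parameter converges uniformly in time
  have hslope : ∀ ε > (0:ℝ), ∃ η > (0:ℝ), η ≤ 1 ∧ ∀ u : ℝ, u ≠ s → |u - s| ≤ η →
      ∀ t ∈ Set.Icc (0:ℝ) 1, ‖(u - s)⁻¹ • (A u t - A s t) - A' (s, t)‖ ≤ ε := by
    intro ε hε
    obtain ⟨η, hη0, hη1, hηA'⟩ := huc A' hA'cont ε hε
    refine ⟨η, hη0, hη1, ?_⟩
    intro u hu hus t ht
    have hmvt := Convex.norm_image_sub_le_of_norm_hasDerivWithin_le
      (f := fun v => A v t - (v - s) • A' (s, t)) (f' := fun v => A' (v, t) - A' (s, t))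
      (s := Set.uIcc s u) (C := ε) (x := s) (y := u)
      (fun v _ => by
        have h := ((hder v t).sub (((hasDerivAt_id v).sub_const s).smul_const (A' (s, t))))
        simp only [one_smul] at h
        exact h.hasDerivWithinAt)
      (fun v hv => by
        have h1 : |v - s| ≤ η := (abs_sub_left_of_mem_uIcc hv).trans hus
        exact hηA' v h1 t ht)
      (convex_uIcc s u) left_mem_uIcc right_mem_uIcc
    simp only [sub_self, zero_smul, sub_zero] at hmvt
    have hne : u - s ≠ 0 := sub_ne_zero.2 hu
    have heq : (u - s)⁻¹ • (A u t - A s t) - A' (s, t)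
        = (u - s)⁻¹ • (A u t - (u - s) • A' (s, t) - A s t) := by
      simp only [smul_sub, smul_smul, inv_mul_cancel₀ hne, one_smul]
      abel
    rw [heq, norm_smul, norm_inv, Real.norm_eq_abs]
    calc |u - s|⁻¹ * ‖A u t - (u - s) • A' (s, t) - A s t‖
        ≤ |u - s|⁻¹ * (ε * ‖u - s‖) := by
          refine mul_le_mul_of_nonneg_left ?_ (by positivity)
          exact hmvt
      _ = ε := by
          rw [Real.norm_eq_abs]
          field_simp
  -- the inverse parallel transport
  have hunit : ∀ t ∈ Set.Icc (0:ℝ) 1, IsUnit (Y s t) :=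
    fun t ht => holaux_isUnit (hAc s) (hY s) (hY0 s) ht.1
  set W : ℝ → Matrix (Fin n) (Fin n) ℂ := fun t => (Y s t)⁻¹ with hWdef
  have hW' : ∀ t ∈ Set.Icc (0:ℝ) 1, HasDerivAt W (-(A s t * W t)) t :=
    fun t ht => holaux_hasDerivAt_inv (hY s) (hunit t ht)
  have hWcont : ContinuousOn W (Set.Icc 0 1) :=
    fun t ht => ((hW' t ht).differentiableAt.continuousAt).continuousWithinAt
  obtain ⟨CW₀, hCW₀⟩ := isCompact_Icc.exists_bound_of_continuousOn hWcont
  set CW : ℝ := max CW₀ 0 with hCWdef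
  have hCW0 : (0:ℝ) ≤ CW := le_max_right _ _
  have hCW : ∀ t ∈ Set.Icc (0:ℝ) 1, ‖W t‖ ≤ CW := fun t ht =>
    (hCW₀ t ht).trans (le_max_left _ _)
  have hWY : ∀ t ∈ Set.Icc (0:ℝ) 1, W t * Y s t = 1 := fun t ht =>
    Matrix.nonsing_inv_mul _ ((Matrix.isUnit_iff_isUnit_det _).mp (hunit t ht))
  have hW0 : W 0 = 1 := by rw [hWdef]; simp [hY0 s]
  have h01 : (0:ℝ) ≤ 1 := zero_le_one
  have hmem1 : (1:ℝ) ∈ Set.Icc (0:ℝ) 1 := ⟨zero_le_one, le_refl _⟩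
  -- interval integrability helper
  have hIntHelp : ∀ (f₁ f₂ : ℝ → Matrix (Fin n) (Fin n) ℂ),
      ContinuousOn f₁ (Set.Icc 0 1) → ContinuousOn f₂ (Set.Icc 0 1) →
      IntervalIntegrable (fun t => L (f₁ t * f₂ t * (W t * Y s 1)))
        MeasureTheory.volume 0 1 := by
    intro f₁ f₂ h₁ h₂
    apply ContinuousOn.intervalIntegrable
    rw [uIcc_of_le h01]
    exact L.continuous.comp_continuousOn
      (((h₁.mul h₂).mul (hWcont.mul continuousOn_const)))
  -- the Duhamel / FTC identity
  have key : ∀ u : ℝ, (Y u 1).trace - (Y s 1).trace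
      = ∫ t in (0:ℝ)..1, L (Y u t * (A u t - A s t) * (W t * Y s 1)) := by
    intro u
    have hG : ∀ t ∈ Set.uIcc (0:ℝ) 1, HasDerivAt (fun τ => L (Y u τ * (W τ * Y s 1)))
        (L (Y u t * (A u t - A s t) * (W t * Y s 1))) t := by
      intro t ht
      rw [uIcc_of_le h01] at ht
      have h1 : HasDerivAt (fun τ => Y u τ * (W τ * Y s 1))
          ((Y u t * A u t) * (W t * Y s 1) + Y u t * ((-(A s t * W t)) * Y s 1)) t :=
        (hY u t).mul ((hW' t ht).mul_const (Y s 1))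
      have h2 := L.hasFDerivAt.comp_hasDerivAt t h1
      have e : Y u t * A u t * (W t * Y s 1) + Y u t * (-(A s t * W t) * Y s 1)
          = Y u t * (A u t - A s t) * (W t * Y s 1) := by noncomm_ring
      rw [e] at h2
      exact h2
    have hInt := hIntHelp (fun t => Y u t) (fun t => A u t - A s t)
      (hYc u).continuousOn ((hAc u).continuousOn.sub (hAc s).continuousOn)
    have hFTC := intervalIntegral.integral_eq_sub_of_hasDerivAt hG hInt
    rw [hFTC, hWY 1 hmem1, hW0, hY0 u, mul_one, one_mul, one_mul, hL, hL]
  -- identify the stated derivative with the limit candidate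
  have htarget : (∫ t in (0:ℝ)..1,
        (Y s t * deriv (fun u => A u t) s * (Y s t)⁻¹ * Y s 1).trace)
      = ∫ t in (0:ℝ)..1, L (Y s t * A' (s, t) * (W t * Y s 1)) := by
    refine intervalIntegral.integral_congr (fun t _ => ?_)
    erw [(hder s t).deriv, hL, mul_assoc (Y s t * A' (s, t))]
  rw [htarget]
  rw [hasDerivAt_iff_tendsto_slope]
  rw [Metric.tendsto_nhdsWithin_nhds]
  intro ε hε
  -- choose the smallness parameters
  set NL : ℝ := @norm _ (ContinuousLinearMap.hasOpNorm (𝕜 := ℝ) (𝕜₂ := ℝ)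
    (E := Matrix (Fin n) (Fin n) ℂ) (F := ℂ) (σ₁₂ := RingHom.id ℝ)) L with hNLdef
  have hNL0 : 0 ≤ NL := norm_nonneg _
  set Q : ℝ := NL * (CA' + 1 + CY) * (CW * CY + 1) with hQdef
  have hQ0 : 0 ≤ Q := mul_nonneg (mul_nonneg hNL0 (by positivity)) (by positivity)
  set e0 : ℝ := ε / (2 * (Q + 1)) with he0def
  have he00 : 0 < e0 := by positivity
  obtain ⟨η₁, hη₁0, hη₁1, hη₁⟩ := hYdiff e0 he00
  obtain ⟨η₂, hη₂0, hη₂1, hη₂⟩ := hslope (min 1 e0) (lt_min one_pos he00)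
  refine ⟨min η₁ η₂, lt_min hη₁0 hη₂0, ?_⟩
  intro u hu hdist
  have hune : u ≠ s := hu
  rw [Real.dist_eq] at hdist
  have hu₁ : |u - s| ≤ η₁ := (hdist.le).trans (min_le_left _ _)
  have hu₂ : |u - s| ≤ η₂ := (hdist.le).trans (min_le_right _ _)
  -- rewrite the slope as an integral
  set Bu : ℝ → Matrix (Fin n) (Fin n) ℂ := fun t => (u - s)⁻¹ • (A u t - A s t) with hBudef
  have hslopeEq : slope (fun u => (Y u 1).trace) s u
      = ∫ t in (0:ℝ)..1, L (Y u t * Bu t * (W t * Y s 1)) := by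
    rw [slope_def_module, key u, ← intervalIntegral.integral_smul]
    refine intervalIntegral.integral_congr (fun t _ => ?_)
    rw [← L.map_smul]
    congr 1
    rw [hBudef]
    simp only [smul_mul_assoc, mul_smul_comm]
  rw [hslopeEq, dist_eq_norm]
  have hIntu := hIntHelp (fun t => Y u t) Bu (hYc u).continuousOn
    (((hAc u).continuousOn.sub (hAc s).continuousOn).const_smul (u - s)⁻¹)
  have hInts := hIntHelp (fun t => Y s t) (fun t => A' (s, t)) (hYc s).continuousOn
    (hA'cont.comp (continuous_const.prodMk continuous_id)).continuousOn
  rw [← intervalIntegral.integral_sub hIntu hInts]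
  have hbound : ∀ t ∈ Set.uIoc (0:ℝ) 1,
      ‖L (Y u t * Bu t * (W t * Y s 1)) - L (Y s t * A' (s, t) * (W t * Y s 1))‖
        ≤ e0 * Q := by
    intro t ht
    have htI : t ∈ Set.Icc (0:ℝ) 1 := by
      rw [Set.uIoc_of_le h01] at ht
      exact ⟨ht.1.le, ht.2⟩
    have hYu : ‖Y u t - Y s t‖ ≤ e0 := hη₁ u hu₁ t htI
    have hBA : ‖Bu t - A' (s, t)‖ ≤ min 1 e0 := hη₂ u hune hu₂ t htI
    have hBu : ‖Bu t‖ ≤ CA' + 1 := by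
      calc ‖Bu t‖ = ‖(Bu t - A' (s, t)) + A' (s, t)‖ := by congr 1; abel
        _ ≤ ‖Bu t - A' (s, t)‖ + ‖A' (s, t)‖ := norm_add_le _ _
        _ ≤ 1 + CA' := add_le_add (hBA.trans (min_le_left _ _)) (hCA' t htI)
        _ = CA' + 1 := by ring
    have hR : ‖W t * Y s 1‖ ≤ CW * CY := by
      calc ‖W t * Y s 1‖ ≤ ‖W t‖ * ‖Y s 1‖ := norm_mul_le _ _
        _ ≤ CW * CY := mul_le_mul (hCW t htI) (hYbdd s hsIcc 1 hmem1) (norm_nonneg _) hCW0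
    have hsplit : Y u t * Bu t * (W t * Y s 1) - Y s t * A' (s, t) * (W t * Y s 1)
        = ((Y u t - Y s t) * Bu t + Y s t * (Bu t - A' (s, t))) * (W t * Y s 1) := by
      noncomm_ring
    rw [← map_sub, hsplit]
    calc ‖L (((Y u t - Y s t) * Bu t + Y s t * (Bu t - A' (s, t))) * (W t * Y s 1))‖
        ≤ NL * ‖((Y u t - Y s t) * Bu t + Y s t * (Bu t - A' (s, t))) * (W t * Y s 1)‖ :=
          L.le_opNorm _
      _ ≤ NL * ((‖(Y u t - Y s t)‖ * ‖Bu t‖ + ‖Y s t‖ * ‖Bu t - A' (s, t)‖)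
            * ‖W t * Y s 1‖) := by
          refine mul_le_mul_of_nonneg_left ?_ hNL0
          refine (norm_mul_le _ _).trans ?_
          refine mul_le_mul_of_nonneg_right ?_ (norm_nonneg _)
          exact (norm_add_le _ _).trans (add_le_add (norm_mul_le _ _) (norm_mul_le _ _))
      _ ≤ NL * ((e0 * (CA' + 1) + CY * e0) * (CW * CY)) := by
          refine mul_le_mul_of_nonneg_left ?_ hNL0
          refine mul_le_mul ?_ hR (norm_nonneg _) (by positivity)
          refine add_le_add ?_ ?_
          · exact mul_le_mul hYu hBu (norm_nonneg _) he00.le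
          · exact mul_le_mul (hYbdd s hsIcc t htI) (hBA.trans (min_le_right _ _))
              (norm_nonneg _) hCY0
      _ ≤ e0 * Q := by
          rw [hQdef]
          nlinarith [hNL0, he00.le, hCA'0, hCY0, hCW0,
            mul_nonneg hCW0 hCY0, mul_nonneg hNL0 (mul_nonneg hCW0 hCY0)]
    done
  have hle := intervalIntegral.norm_integral_le_of_norm_le_const hbound
  rw [sub_zero, abs_one, mul_one] at hle
  refine lt_of_le_of_lt hle ?_
  rw [he0def]
  rw [div_mul_eq_mul_div, div_lt_iff₀ (by positivity)]
  nlinarith [hQ0, hε]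
end
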